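/- arXiv:1504.06408 — 6 statements merged into one kernel-verified Lean document; each statement's English description precedes it below -/
import Mathlib

section
/- Let n ≥ 1 and suppose that every complex root of the polynomial R_n(w) = ∑_{m=0}^{n} ((n+m)!/(m!·(n−m)!))·w^m has negative real part. Then for every w ∈ ℂ with Re w > 0 one has R_n(w) + w·R_n′(w) ≠ 0; equivalently, the derivative of the polynomial w ↦ w·R_n(w) has no zero in the open right half-plane {Re w > 0}. -/
open Polynomial

/-- The polynomial `R_n(w) = ∑_{m=0}^{n} ((n+m)!/(m!(n-m)!)) w^m`. -/
noncomputable def Rpoly (n : ℕ) : Polynomial ℂ :=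
  ∑ m ∈ Finset.range (n + 1),
    Polynomial.C ((Nat.factorial (n + m) : ℂ) /
      ((Nat.factorial m : ℂ) * (Nat.factorial (n - m) : ℂ))) * Polynomial.X ^ m

lemma Rpoly_coeff_n (n : ℕ) : (Rpoly n).coeff n =
    (Nat.factorial (n + n) : ℂ) / ((Nat.factorial n : ℂ) * (Nat.factorial (n - n) : ℂ)) := by
  rw [Rpoly, Polynomial.finset_sum_coeff]
  rw [Finset.sum_eq_single n]
  · simp
  · intro m hm hmn
    simp [Polynomial.coeff_C_mul, Polynomial.coeff_X_pow, Ne.symm hmn]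
  · intro h
    exact absurd (Finset.self_mem_range_succ n) h

lemma Rpoly_coeff_n_ne (n : ℕ) : (Rpoly n).coeff n ≠ 0 := by
  rw [Rpoly_coeff_n]
  have h1 : (Nat.factorial (n + n) : ℂ) ≠ 0 := Nat.cast_ne_zero.mpr (Nat.factorial_ne_zero _)
  have h2 : (Nat.factorial n : ℂ) ≠ 0 := Nat.cast_ne_zero.mpr (Nat.factorial_ne_zero _)
  have h3 : (Nat.factorial (n - n) : ℂ) ≠ 0 := Nat.cast_ne_zero.mpr (Nat.factorial_ne_zero _)
  exact div_ne_zero h1 (mul_ne_zero h2 h3)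

lemma Rpoly_natDegree (n : ℕ) : (Rpoly n).natDegree = n := by
  have hle : (Rpoly n).natDegree ≤ n := by
    apply Polynomial.natDegree_sum_le_of_forall_le
    intro m hm
    calc (Polynomial.C ((Nat.factorial (n + m) : ℂ) /
          ((Nat.factorial m : ℂ) * (Nat.factorial (n - m) : ℂ))) * Polynomial.X ^ m).natDegree
        ≤ m := by
          apply le_trans (Polynomial.natDegree_C_mul_le _ _)
          simp
      _ ≤ n := Nat.lt_succ_iff.mp (Finset.mem_range.mp hm)
  have hge : n ≤ (Rpoly n).natDegree := Polynomial.le_natDegree_of_ne_zero (Rpoly_coeff_n_ne n)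
  omega

lemma Rpoly_ne_zero (n : ℕ) : Rpoly n ≠ 0 := fun h => Rpoly_coeff_n_ne n (by simp [h])

/-- Key induction: evaluation and derivative of a product of linear factors. -/
lemma prod_linear_eval (w : ℂ) (s : Multiset ℂ) (hs : ∀ r ∈ s, w - r ≠ 0) :
    Polynomial.eval w (s.map (fun r => Polynomial.X - Polynomial.C r)).prod ≠ 0 ∧
    Polynomial.eval w (Polynomial.derivative (s.map (fun r => Polynomial.X - Polynomial.C r)).prod)
      = (s.map fun r => (w - r)⁻¹).sum *
        Polynomial.eval w (s.map (fun r => Polynomial.X - Polynomial.C r)).prod := by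
  induction s using Multiset.induction with
  | empty => simp
  | cons a t ih =>
    have ha : w - a ≠ 0 := hs a (Multiset.mem_cons_self a t)
    obtain ⟨h1, h2⟩ := ih (fun r hr => hs r (Multiset.mem_cons_of_mem hr))
    simp only [Multiset.map_cons, Multiset.prod_cons, Multiset.sum_cons]
    constructor
    · simp only [Polynomial.eval_mul, Polynomial.eval_sub, Polynomial.eval_X, Polynomial.eval_C]
      exact mul_ne_zero ha h1
    · rw [Polynomial.derivative_mul]
      simp only [Polynomial.eval_add, Polynomial.eval_mul, Polynomial.eval_sub,
        Polynomial.eval_X, Polynomial.eval_C, Polynomial.derivative_sub,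
        Polynomial.derivative_X, Polynomial.derivative_C, sub_zero, Polynomial.eval_one, h2]
      field_simp

theorem stmt_0 (n : ℕ) (hn : 1 ≤ n)
    (hroots : ∀ w : ℂ, (Rpoly n).IsRoot w → w.re < 0) :
    ∀ w : ℂ, 0 < w.re →
      (Rpoly n).eval w + w * (Polynomial.derivative (Rpoly n)).eval w ≠ 0 := by
  intro w hw
  set p := Rpoly n with hp
  have hpne : p ≠ 0 := Rpoly_ne_zero n
  have hsplits : p.Splits := IsAlgClosed.splits p
  have hcard : p.roots.card = p.natDegree := (Polynomial.splits_iff_card_roots).mp hsplits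
  have hfact : Polynomial.C p.leadingCoeff *
      (p.roots.map (fun a => Polynomial.X - Polynomial.C a)).prod = p :=
    Polynomial.C_leadingCoeff_mul_prod_multiset_X_sub_C hcard
  set s := p.roots with hs
  have hsroots : ∀ r ∈ s, r.re < 0 := fun r hr =>
    hroots r (Polynomial.isRoot_of_mem_roots hr)
  have hsub : ∀ r ∈ s, w - r ≠ 0 := by
    intro r hr h
    have hwr : w = r := sub_eq_zero.mp h
    have := hsroots r hr
    rw [← hwr] at this
    linarith
  obtain ⟨h1, h2⟩ := prod_linear_eval w s hsub
  set q := (s.map (fun a => Polynomial.X - Polynomial.C a)).prod with hq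
  set S := (s.map fun r => (w - r)⁻¹).sum with hS
  -- leading coeff nonzero
  have hlc : p.leadingCoeff ≠ 0 := Polynomial.leadingCoeff_ne_zero.mpr hpne
  -- rewrite evaluations
  have hev : p.eval w = p.leadingCoeff * q.eval w := by
    conv_lhs => rw [← hfact]
    simp
  have hdev : (Polynomial.derivative p).eval w = p.leadingCoeff * (S * q.eval w) := by
    conv_lhs => rw [← hfact]
    rw [Polynomial.derivative_C_mul]
    simp [h2]
  intro hzero
  rw [hev, hdev] at hzero
  have hkey : (1 : ℂ) + w * S = 0 := by
    have : p.leadingCoeff * (q.eval w * (1 + w * S)) = 0 := by ring_nf; ring_nf at hzero; linear_combination hzero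
    rcases mul_eq_zero.mp this with h | h
    · exact absurd h hlc
    · rcases mul_eq_zero.mp h with h' | h'
      · exact absurd h' h1
      · exact h'
  have hwne : w ≠ 0 := by
    intro h; rw [h] at hw; simp at hw
  have hSval : S = -w⁻¹ := by
    field_simp at hkey ⊢
    linear_combination hkey
  -- real part of S is positive
  have hSre : 0 < S.re := by
    have hmap : S.re = ((s.map fun r => (w - r)⁻¹).map Complex.re).sum := by
      rw [hS]
      exact map_multiset_sum Complex.reAddGroupHom _
    rw [hmap, Multiset.map_map]
    have hpos : ∀ x ∈ s.map (Complex.re ∘ fun r => (w - r)⁻¹), 0 < x := by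
      intro x hx
      obtain ⟨r, hr, rfl⟩ := Multiset.mem_map.mp hx
      have hwr := hsub r hr
      simp only [Function.comp_apply, Complex.inv_re]
      apply div_pos
      · simp only [Complex.sub_re]; linarith [hsroots r hr]
      · exact Complex.normSq_pos.mpr hwr
    have hsne : s ≠ 0 := by
      intro h
      have : p.natDegree = 0 := by rw [← hcard, h]; simp
      rw [hp, Rpoly_natDegree] at this
      omega
    obtain ⟨a, ha⟩ := Multiset.exists_mem_of_ne_zero hsne
    have ha' : (Complex.re ∘ fun r => (w - r)⁻¹) a ∈
        s.map (Complex.re ∘ fun r => (w - r)⁻¹) := Multiset.mem_map_of_mem _ ha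
    calc (0:ℝ) < (Complex.re ∘ fun r => (w - r)⁻¹) a := hpos _ ha'
      _ ≤ _ := Multiset.single_le_sum (fun x hx => (hpos x hx).le) _ ha'
  -- but Re(-w⁻¹) < 0
  have : S.re < 0 := by
    rw [hSval]
    simp only [Complex.neg_re, Complex.inv_re, neg_neg]
    have : 0 < w.re / Complex.normSq w := div_pos hw (Complex.normSq_pos.mpr hwne)
    linarith
  linarith
end

section
/- Let 0 < γ < 1, let n ≥ 1, and let z₁, …, zₙ ∈ ℂ satisfy Re zⱼ < 0 for every j. Suppose w ∈ ℂ with Re w > 0 (so in particular w ≠ 0 and w ≠ zⱼ for all j) satisfies (1−γ)/(2w²) + 1/w + ∑_{j=1}^{n} 1/(w−zⱼ) = 0. Then 2·(Re w)·|w|² + (1−γ)·((Re w)² − (Im w)²) < 0; in particular (Im w)² > (Re w)². -/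
theorem stmt_1 (γ : ℝ) (hγ0 : 0 < γ) (hγ1 : γ < 1)
    (n : ℕ) (hn : 1 ≤ n) (z : Fin n → ℂ) (hz : ∀ j, (z j).re < 0)
    (w : ℂ) (hw : 0 < w.re)
    (heq : (1 - (γ : ℂ)) / (2 * w ^ 2) + 1 / w + ∑ j, 1 / (w - z j) = 0) :
    2 * w.re * ‖w‖ ^ 2 + (1 - γ) * (w.re ^ 2 - w.im ^ 2) < 0 ∧
      w.re ^ 2 < w.im ^ 2 := by
  have hw0 : w ≠ 0 := fun h => by simp [h] at hw
  have hN : 0 < Complex.normSq w := Complex.normSq_pos.mpr hw0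
  have hzw : ∀ j, 0 < (w - z j).re := fun j => by
    have := hz j; simp only [Complex.sub_re]; linarith
  have hzw0 : ∀ j, w - z j ≠ 0 := fun j h => by
    have := hzw j; rw [h] at this; simp at this
  haveI : Nonempty (Fin n) := ⟨⟨0, hn⟩⟩
  have hSpos : 0 < ∑ j, (1 / (w - z j)).re := by
    apply Finset.sum_pos
    · intro j _
      rw [one_div, Complex.inv_re]
      exact div_pos (hzw j) (Complex.normSq_pos.mpr (hzw0 j))
    · exact Finset.univ_nonempty
  set S := ∑ j, (1 / (w - z j)).re with hSdef
  have hre := congrArg Complex.re heq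
  have hsum : (∑ j, 1 / (w - z j)).re = S := by
    rw [hSdef, Complex.re_sum]
  have h1 : ((1 - (γ : ℂ)) / (2 * w ^ 2)).re
      = (1 - γ) * (w.re ^ 2 - w.im ^ 2) / (2 * (Complex.normSq w) ^ 2) := by
    have hNe : Complex.normSq w ≠ 0 := ne_of_gt hN
    have hb : Complex.normSq (2 * w ^ 2) = 4 * (Complex.normSq w) ^ 2 := by
      rw [Complex.normSq_mul, pow_two, Complex.normSq_mul]
      norm_num [Complex.normSq_apply]; ring
    rw [Complex.div_re, hb]
    simp only [Complex.sub_re, Complex.sub_im, Complex.one_re, Complex.one_im,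
      Complex.ofReal_re, Complex.ofReal_im, Complex.mul_re, Complex.mul_im,
      Complex.re_ofNat, Complex.im_ofNat, pow_two, Complex.mul_re, Complex.mul_im]
    field_simp
    ring
  have h2 : (1 / w).re = w.re / Complex.normSq w := by
    rw [one_div, Complex.inv_re]
  rw [Complex.add_re, Complex.add_re, h1, h2, hsum, Complex.zero_re] at hre
  have hNe : (Complex.normSq w) ≠ 0 := ne_of_gt hN
  have key : (1 - γ) * (w.re ^ 2 - w.im ^ 2) + 2 * w.re * Complex.normSq w
      + 2 * (Complex.normSq w) ^ 2 * S = 0 := by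
    field_simp at hre
    nlinarith [hre, hN]
  have habs : (‖w‖) ^ 2 = Complex.normSq w := Complex.sq_norm w
  constructor
  · rw [habs]
    nlinarith [mul_pos (mul_pos two_pos (pow_pos hN 2)) hSpos]
  · nlinarith [mul_pos (mul_pos two_pos (pow_pos hN 2)) hSpos,
      mul_pos hw hN]
end

section
/- Let 0 < γ < 1, let n ≥ 1, and let z₁, …, zₙ ∈ ℂ satisfy Re zⱼ < 0 for every j. Suppose λ ∈ ℂ with Re λ < 0 is such that w := −1/(2λ) satisfies (1−γ)/(2w²) + 1/w + ∑_{j=1}^{n} 1/(w−zⱼ) = 0. Then |Re λ| < |Im λ| and (1−γ)·((Re λ)² − (Im λ)²) < Re λ. -/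
theorem stmt_2 (γ : ℝ) (hγ0 : 0 < γ) (hγ1 : γ < 1)
    (n : ℕ) (hn : 1 ≤ n) (z : Fin n → ℂ) (hz : ∀ j, (z j).re < 0)
    (lam : ℂ) (hlam : lam.re < 0) (w : ℂ) (hw : w = -1 / (2 * lam))
    (heq : (1 - (γ : ℂ)) / (2 * w ^ 2) + 1 / w + ∑ j, 1 / (w - z j) = 0) :
    |lam.re| < |lam.im| ∧ (1 - γ) * (lam.re ^ 2 - lam.im ^ 2) < lam.re := by
  have hlam0 : lam ≠ 0 := by
    intro h; rw [h] at hlam; simp at hlam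
  have h2lam : (2 : ℂ) * lam ≠ 0 := by
    simp [hlam0]
  have hw0 : w ≠ 0 := by
    rw [hw]; simp [h2lam]
  have hinv : w⁻¹ = -(2 * lam) := by
    rw [hw]; field_simp
  -- Re w > 0
  have hnsq : 0 < Complex.normSq w := Complex.normSq_pos.mpr hw0
  have hinvre : (w⁻¹).re = w.re / Complex.normSq w := Complex.inv_re w
  have hwre : 0 < w.re := by
    have h1 : (w⁻¹).re = -(2 * lam.re) := by rw [hinv]; simp
    have h2 : w.re = -(2 * lam.re) * Complex.normSq w := by
      rw [← h1, hinvre]; field_simp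
    rw [h2]
    have : 0 < -(2 * lam.re) := by linarith
    positivity
  -- each summand has positive real part
  have hterm : ∀ j : Fin n, 0 < (1 / (w - z j)).re := by
    intro j
    have hre : 0 < (w - z j).re := by
      have := hz j; simp [Complex.sub_re]; linarith
    have hne : w - z j ≠ 0 := by
      intro h; rw [h] at hre; simp at hre
    rw [one_div, Complex.inv_re]
    exact div_pos hre (Complex.normSq_pos.mpr hne)
  have hsum : 0 < ∑ j, (w.re - (z j).re) / Complex.normSq (w - z j) := by
    apply Finset.sum_pos
    · intro j _
      have hre : 0 < (w - z j).re := by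
        have := hz j; simp [Complex.sub_re]; linarith
      have hne : w - z j ≠ 0 := by
        intro h; rw [h] at hre; simp at hre
      have := div_pos hre (Complex.normSq_pos.mpr hne)
      simpa [Complex.sub_re] using this
    · exact Finset.univ_nonempty_iff.mpr (Fin.pos_iff_nonempty.mp hn)
  -- rewrite the first two terms via lam
  have e1 : (1 - (γ : ℂ)) / (2 * w ^ 2) = (1 - (γ : ℂ)) * (2 * lam ^ 2) := by
    have : w ^ 2 = (-(2 * lam))⁻¹ ^ 2 := by rw [← hinv, inv_inv]
    rw [this]
    field_simp
  have e2 : 1 / w = -(2 * lam) := by rw [one_div, hinv]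
  rw [e1, e2] at heq
  have hre := congrArg Complex.re heq
  simp [Complex.add_re, Complex.mul_re, Complex.sub_re, Complex.ofReal_re,
    Complex.ofReal_im, Complex.mul_im, pow_two] at hre
  -- hre should now be a real equation; conclude
  have key : (1 - γ) * (lam.re ^ 2 - lam.im ^ 2) < lam.re := by
    nlinarith [hsum, hre]
  have hsq : lam.re ^ 2 < lam.im ^ 2 := by
    have h1γ : 0 < 1 - γ := by linarith
    nlinarith [key]
  refine ⟨?_, key⟩
  nlinarith [sq_abs lam.re, sq_abs lam.im, abs_nonneg lam.re, abs_nonneg lam.im, hsq]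
end

section
/- Let γ > 1 and n ∈ ℕ. Define the polynomial F_n(w) = ((1−γ)/2 + w)·R_n(w) + w²·R_n′(w), where R_n(w) = ∑_{m=0}^{n} ((n+m)!/(m!·(n−m)!))·w^m. Then F_n(0) = (1−γ)/2 < 0 and F_n has at least one real root w₀ with w₀ > 0. -/
open Polynomial

/-- The polynomial `F_n(w) = ((1-γ)/2 + w)·R_n(w) + w²·R_n′(w)`. -/
noncomputable def Fpoly (γ : ℝ) (n : ℕ) : Polynomial ℂ :=
  (Polynomial.C (((1 - γ : ℝ) : ℂ) / 2) + Polynomial.X) * Rpoly n +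
    Polynomial.X ^ 2 * Polynomial.derivative (Rpoly n)

/-- Real version of `Rpoly`. -/
noncomputable def Rr (n : ℕ) : Polynomial ℝ :=
  ∑ m ∈ Finset.range (n + 1),
    Polynomial.C ((Nat.factorial (n + m) : ℝ) /
      ((Nat.factorial m : ℝ) * (Nat.factorial (n - m) : ℝ))) * Polynomial.X ^ m

/-- Real version of `Fpoly`. -/
noncomputable def Fr (γ : ℝ) (n : ℕ) : Polynomial ℝ :=
  (Polynomial.C ((1 - γ) / 2) + Polynomial.X) * Rr n +
    Polynomial.X ^ 2 * Polynomial.derivative (Rr n)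

lemma Rr_map (n : ℕ) : (Rr n).map (algebraMap ℝ ℂ) = Rpoly n := by
  simp only [Rr, Rpoly, Polynomial.map_sum, Polynomial.map_mul, Polynomial.map_C,
    Polynomial.map_pow, Polynomial.map_X]
  refine Finset.sum_congr rfl fun m _ => ?_
  congr 1
  rw [show (algebraMap ℝ ℂ) = Complex.ofReal from rfl]
  push_cast
  ring

lemma Fr_map (γ : ℝ) (n : ℕ) : (Fr γ n).map (algebraMap ℝ ℂ) = Fpoly γ n := by
  simp only [Fr, Fpoly, Polynomial.map_add, Polynomial.map_mul, Polynomial.map_C,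
    Polynomial.map_pow, Polynomial.map_X, ← Polynomial.derivative_map, Rr_map]
  norm_num

lemma Fpoly_eval_real (γ : ℝ) (n : ℕ) (w : ℝ) :
    (Fpoly γ n).eval (w : ℂ) = (((Fr γ n).eval w : ℝ) : ℂ) := by
  rw [← Fr_map, Polynomial.eval_map]
  exact Polynomial.eval₂_at_apply (algebraMap ℝ ℂ) w

lemma Rr_eval_one_le (n : ℕ) {w : ℝ} (hw : 0 ≤ w) : 1 ≤ (Rr n).eval w := by
  have h0 : (0 : ℕ) ∈ Finset.range (n + 1) := by simp
  have := Finset.single_le_sum (f := fun m =>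
      ((Nat.factorial (n + m) : ℝ) / ((Nat.factorial m : ℝ) * (Nat.factorial (n - m) : ℝ))) * w ^ m)
    (fun m _ => by positivity) h0
  simp only [Rr, Polynomial.eval_finset_sum, Polynomial.eval_mul, Polynomial.eval_C,
    Polynomial.eval_pow, Polynomial.eval_X]
  calc (1 : ℝ) = (Nat.factorial (n + 0) : ℝ) /
        ((Nat.factorial 0 : ℝ) * (Nat.factorial (n - 0) : ℝ)) * w ^ 0 := by
        simp [Nat.factorial_ne_zero]
    _ ≤ _ := this

lemma Rr_deriv_nonneg (n : ℕ) {w : ℝ} (hw : 0 ≤ w) :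
    0 ≤ (Polynomial.derivative (Rr n)).eval w := by
  simp only [Rr, Polynomial.derivative_sum, Polynomial.derivative_C_mul,
    Polynomial.derivative_X_pow, Polynomial.eval_finset_sum, Polynomial.eval_mul,
    Polynomial.eval_C, Polynomial.eval_pow, Polynomial.eval_X, Polynomial.eval_natCast]
  refine Finset.sum_nonneg fun m _ => ?_
  positivity

lemma Rr_eval_zero (n : ℕ) : (Rr n).eval 0 = 1 := by
  simp only [Rr, Polynomial.eval_finset_sum, Polynomial.eval_mul, Polynomial.eval_C,
    Polynomial.eval_pow, Polynomial.eval_X]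
  rw [Finset.sum_eq_single 0]
  · simp [Nat.factorial_ne_zero]
  · intro m _ hm
    simp [zero_pow hm]
  · simp

theorem stmt_3 (γ : ℝ) (hγ : 1 < γ) (n : ℕ) :
    (Fpoly γ n).eval 0 = ((1 - γ : ℝ) : ℂ) / 2 ∧ (1 - γ) / 2 < 0 ∧
      ∃ w₀ : ℝ, 0 < w₀ ∧ (Fpoly γ n).eval (w₀ : ℂ) = 0 := by
  have hneg : (1 - γ) / 2 < 0 := by linarith
  have heval0 : (Fr γ n).eval 0 = (1 - γ) / 2 := by
    simp [Fr, Rr_eval_zero]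
  refine ⟨?_, hneg, ?_⟩
  · have := Fpoly_eval_real γ n 0
    rw [show ((0 : ℝ) : ℂ) = 0 by norm_num] at this
    rw [this, heval0]
    push_cast
    ring
  · -- IVT on Fr
    have hγ0 : (0 : ℝ) ≤ γ := by linarith
    have hFγ : 0 < (Fr γ n).eval γ := by
      have h1 : 1 ≤ (Rr n).eval γ := Rr_eval_one_le n hγ0
      have h2 : 0 ≤ (Polynomial.derivative (Rr n)).eval γ := Rr_deriv_nonneg n hγ0
      have hfac : 0 < (1 - γ) / 2 + γ := by linarith
      have : (1 - γ) / 2 + γ ≤ ((1 - γ) / 2 + γ) * (Rr n).eval γ :=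
        le_mul_of_one_le_right hfac.le h1
      simp only [Fr, Polynomial.eval_add, Polynomial.eval_mul, Polynomial.eval_C,
        Polynomial.eval_X, Polynomial.eval_pow]
      nlinarith
    have hcont : ContinuousOn (fun w => (Fr γ n).eval w) (Set.Icc 0 γ) :=
      (Polynomial.continuous _).continuousOn
    have hmem : (0 : ℝ) ∈ Set.Ioo ((Fr γ n).eval 0) ((Fr γ n).eval γ) := by
      rw [heval0]; exact ⟨hneg, hFγ⟩
    obtain ⟨w₀, hw₀, hval⟩ := intermediate_value_Ioo hγ0 hcont hmem
    have hval' : (Fr γ n).eval w₀ = 0 := hval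
    exact ⟨w₀, hw₀.1, by rw [Fpoly_eval_real, hval']; norm_num⟩
end

section
/- Let γ ≥ 1, let n ≥ 1, and let z₁, …, zₙ ∈ ℂ satisfy Re zⱼ < 0 for every j, with the multiset {z₁, …, zₙ} invariant under complex conjugation. If w ∈ ℂ has Re w > 0 and satisfies (1−γ)/(2w²) + 1/w + ∑_{j=1}^{n} 1/(w−zⱼ) = 0, then Im w = 0, i.e. w is real. -/
theorem stmt_4 (γ : ℝ) (hγ : 1 ≤ γ)
    (n : ℕ) (hn : 1 ≤ n) (z : Fin n → ℂ) (hz : ∀ j, (z j).re < 0)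
    (hconj : Multiset.map (starRingEnd ℂ) ((List.ofFn z : List ℂ) : Multiset ℂ) =
      ((List.ofFn z : List ℂ) : Multiset ℂ))
    (w : ℂ) (hw : 0 < w.re)
    (heq : (1 - (γ : ℂ)) / (2 * w ^ 2) + 1 / w + ∑ j, 1 / (w - z j) = 0) :
    w.im = 0 := by
  have hw0 : w ≠ 0 := fun h => by simp [h] at hw
  have hwz : ∀ j, w - z j ≠ 0 := by
    intro j h
    have : (w - z j).re = 0 := by rw [h]; simp
    rw [Complex.sub_re] at this
    have := hz j
    linarith
  have hN : 0 < Complex.normSq w := Complex.normSq_pos.mpr hw0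
  have hN1 : ∀ j, 0 < Complex.normSq (w - z j) :=
    fun j => Complex.normSq_pos.mpr (hwz j)
  have hN2 : ∀ j, 0 < Complex.normSq (w - (starRingEnd ℂ) (z j)) := by
    intro j
    apply Complex.normSq_pos.mpr
    intro h
    have : (w - (starRingEnd ℂ) (z j)).re = 0 := by rw [h]; simp
    rw [Complex.sub_re, Complex.conj_re] at this
    have := hz j
    linarith
  -- step 1: multiply equation by w
  have h2 : (1 - (γ : ℂ)) / (2 * w) + 1 + ∑ j, w / (w - z j) = 0 := by
    have e : (1 - (γ : ℂ)) / (2 * w) + 1 + ∑ j, w / (w - z j)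
        = w * ((1 - (γ : ℂ)) / (2 * w ^ 2) + 1 / w + ∑ j, 1 / (w - z j)) := by
      rw [mul_add, mul_add, Finset.mul_sum]
      congr 1
      · congr 1
        · field_simp
        · field_simp
      · exact Finset.sum_congr rfl fun j _ => (mul_one_div _ _).symm
    rw [e, heq, mul_zero]
  -- step 2: take imaginary part
  set f : ℂ → ℝ := fun u => (w / (w - u)).im with hf
  have hkey : (γ - 1) * w.im / (2 * Complex.normSq w) + ∑ j, f (z j) = 0 := by
    have him := congrArg Complex.im h2
    rw [Complex.add_im, Complex.add_im, Complex.im_sum, Complex.one_im, Complex.zero_im]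
      at him
    have e1 : ((1 - (γ : ℂ)) / (2 * w)).im = (γ - 1) * w.im / (2 * Complex.normSq w) := by
      have hNe : Complex.normSq (2 * w) = 4 * Complex.normSq w := by
        simp [Complex.normSq_apply, Complex.mul_re, Complex.mul_im]; ring
      rw [Complex.div_im, hNe]
      simp only [Complex.sub_im, Complex.one_im, Complex.ofReal_im, Complex.sub_re,
        Complex.one_re, Complex.ofReal_re, Complex.mul_im, Complex.mul_re,
        Complex.re_ofNat, Complex.im_ofNat]
      field_simp [hN.ne']
      ring
    rw [e1] at him
    linarith [him]
  -- step 3: conjugation symmetry of sums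
  have hsym : ∀ F : ℂ → ℝ, ∑ j, F ((starRingEnd ℂ) (z j)) = ∑ j, F (z j) := by
    intro F
    have key : ∀ G : ℂ → ℝ, ∑ j, G (z j)
        = (Multiset.map G ((List.ofFn z : List ℂ) : Multiset ℂ)).sum := by
      intro G
      rw [Multiset.map_coe, Multiset.sum_coe, List.map_ofFn, List.sum_ofFn]
      rfl
    have : ∑ j, F ((starRingEnd ℂ) (z j))
        = (Multiset.map F (Multiset.map (starRingEnd ℂ)
            ((List.ofFn z : List ℂ) : Multiset ℂ))).sum := by
      rw [Multiset.map_map, ← key (F ∘ (starRingEnd ℂ))]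
      rfl
    rw [this, hconj, ← key]
  -- step 4: pairing identity
  set C : Fin n → ℝ := fun j =>
    (4 * w.re * (z j).im ^ 2 - (z j).re * (Complex.normSq (w - z j)
      + Complex.normSq (w - (starRingEnd ℂ) (z j))))
      / (Complex.normSq (w - z j) * Complex.normSq (w - (starRingEnd ℂ) (z j))) with hC
  have hCpos : ∀ j, 0 < C j := by
    intro j
    apply div_pos
    · have h1 := hz j
      have h2 := hN1 j
      have h3 := hN2 j
      nlinarith [sq_nonneg (z j).im]
    · exact mul_pos (hN1 j) (hN2 j)
  have hfc : ∀ j, f (z j) + f ((starRingEnd ℂ) (z j)) = w.im * C j := by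
    intro j
    have h1 := (hN1 j).ne'
    have h2 := (hN2 j).ne'
    rw [hf, hC]
    simp only [Complex.div_im]
    simp only [Complex.normSq_apply] at h1 h2 ⊢
    simp only [Complex.sub_re, Complex.sub_im, Complex.conj_re, Complex.conj_im] at h1 h2 ⊢
    rw [div_sub_div_same, div_sub_div_same, div_add_div _ _ h1 h2, ← mul_div_assoc,
      div_eq_div_iff (mul_ne_zero h1 h2) (mul_ne_zero h1 h2)]
    ring
  have hsum2 : 2 * ∑ j, f (z j) = w.im * ∑ j, C j := by
    rw [two_mul, Finset.mul_sum]
    nth_rewrite 1 [← hsym f]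
    rw [← Finset.sum_add_distrib]
    exact Finset.sum_congr rfl fun j _ => by rw [add_comm]; exact hfc j
  have hCsum : 0 < ∑ j, C j := by
    apply Finset.sum_pos (fun j _ => hCpos j)
    haveI : Nonempty (Fin n) := Fin.pos_iff_nonempty.mp hn
    exact Finset.univ_nonempty
  -- step 5: conclude
  have hfinal : w.im * ((γ - 1) + Complex.normSq w * ∑ j, C j) = 0 := by
    have hNne : (2 : ℝ) * Complex.normSq w ≠ 0 := by positivity
    have := hkey
    field_simp at this
    nlinarith [this, hsum2]
  have hpos : 0 < (γ - 1) + Complex.normSq w * ∑ j, C j := by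
    have := mul_pos hN hCsum
    linarith
  exact (mul_eq_zero.mp hfinal).resolve_right hpos.ne'
end

section
/- Let γ > 1 and let a ∈ ℝ with |a| ≤ 1. Set y = √(1 + a²) (so 1 ≤ y ≤ √2) and, for r₀ ≥ 0, set q = √((1+r₀)² + a²). Then for every r₀ ≥ 0 one has γ²·q²·(1 + y) − y²·(1 + q + r₀) > 0. -/
theorem stmt_10 (γ : ℝ) (hγ : 1 < γ) (a : ℝ) (ha : |a| ≤ 1) :
    ∀ r₀ : ℝ, 0 ≤ r₀ →
      0 < γ ^ 2 * Real.sqrt ((1 + r₀) ^ 2 + a ^ 2) ^ 2 *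
            (1 + Real.sqrt (1 + a ^ 2)) -
          Real.sqrt (1 + a ^ 2) ^ 2 *
            (1 + Real.sqrt ((1 + r₀) ^ 2 + a ^ 2) + r₀) := by
  intro r₀ hr
  have ha2 : a ^ 2 ≤ 1 := by
    have := abs_nonneg a
    nlinarith [sq_abs a]
  set y := Real.sqrt (1 + a ^ 2) with hy
  set q := Real.sqrt ((1 + r₀) ^ 2 + a ^ 2) with hq
  have hy2 : y ^ 2 = 1 + a ^ 2 := Real.sq_sqrt (by positivity)
  have hq2 : q ^ 2 = (1 + r₀) ^ 2 + a ^ 2 := Real.sq_sqrt (by positivity)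
  have hy0 : 0 ≤ y := Real.sqrt_nonneg _
  have hq0 : 0 ≤ q := Real.sqrt_nonneg _
  have hy1 : 1 ≤ y := by nlinarith [sq_nonneg a]
  have hqu : 1 + r₀ ≤ q := by nlinarith [sq_nonneg a]
  have h1 : y ^ 2 ≤ 1 + y := by nlinarith
  -- key bound: y^2 * (q - y) ≤ (1+r₀)^2 - 1
  have h2 : y ^ 2 * (q - y) ≤ (1 + r₀) ^ 2 - 1 := by
    have hqy : 0 < q + y := by linarith
    have key : y ^ 2 * (q - y) * (q + y) ≤ ((1 + r₀) ^ 2 - 1) * (q + y) := by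
      have h3 : y ^ 2 * (q - y) * (q + y) = y ^ 2 * ((1 + r₀) ^ 2 - 1) := by ring_nf; nlinarith
      rw [h3]
      have hu2 : (0:ℝ) ≤ (1 + r₀) ^ 2 - 1 := by nlinarith
      have hqy2 : y ^ 2 ≤ q + y := by linarith
      nlinarith [mul_nonneg hu2 (sub_nonneg.mpr hqy2)]
    exact le_of_mul_le_mul_right key hqy
  -- g := (1+y)*q^2 - y^2*(1 + q + r₀) ≥ 0
  have hyle2 : y ≤ 2 := by nlinarith
  have hg : 0 ≤ (1 + y) * q ^ 2 - y ^ 2 * (1 + q + r₀) := by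
    nlinarith [mul_nonneg (mul_nonneg hy0 hr) (by linarith : (0:ℝ) ≤ 1 + r₀ + 1 - y)]
  have hq1 : 1 ≤ q ^ 2 := by nlinarith [sq_nonneg a]
  nlinarith [mul_pos (mul_pos (by nlinarith : (0:ℝ) < γ ^ 2 - 1) (by nlinarith : (0:ℝ) < q ^ 2)) (by linarith : (0:ℝ) < 1 + y)]
end
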